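/- Let g = L_{5,3} (nonzero brackets [e1,e2]=e3, [e1,e3]=e4) and let g_R = g ⊕ ℝ with bracket [(ξ,r),(η,k)] = ([ξ,η],0) and 1 := (0,1). In the complexification (g_R)_ℂ, the complex subspace K := span_ℂ{1, e1, e3, e4, e2 − i·e5} is a complex Lie subalgebra and satisfies K + conj(K) = (g_R)_ℂ and K ∩ conj(K) = span_ℂ{1, e1, e3, e4}. -/

import Mathlib

set_option linter.unnecessarySeqFocus false

open scoped TensorProduct

noncomputable section

section Complexification

variable (V : Type*) [AddCommGroup V] [Module ℝ V]

/-- Complex conjugation on the complexification `ℂ ⊗[ℝ] V`, as a `conj`-semilinear map. -/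
def cxConj : (ℂ ⊗[ℝ] V) →ₛₗ[starRingEnd ℂ] (ℂ ⊗[ℝ] V) where
  toFun := (LinearMap.rTensor V Complex.conjAe.toLinearMap)
  map_add' x y := map_add _ x y
  map_smul' c x := by
    induction x using TensorProduct.induction_on with
    | zero => simp
    | tmul a v => simp [TensorProduct.smul_tmul', smul_eq_mul, map_mul]
    | add x y hx hy =>
        simp only [smul_add, map_add]
        exact congrArg₂ (· + ·) hx hy

instance : RingHomSurjective (starRingEnd ℂ) :=
  ⟨fun c => ⟨(starRingEnd ℂ) c, by simp⟩⟩

/-- The complexification `S_ℂ ⊆ V_ℂ` of a real subspace `S ⊆ V`. -/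
def cxSpan (S : Submodule ℝ V) : Submodule ℂ (ℂ ⊗[ℝ] V) :=
  Submodule.span ℂ ((fun v => (1 : ℂ) ⊗ₜ[ℝ] v) '' (S : Set V))

end Complexification


section TrivialExtension

variable {R : Type*} [CommRing R] {L : Type*} [LieRing L]

/-- The Lie bracket `[(ξ,r),(η,k)] = ([ξ,η],0)` on the abelian extension `L ⊕ R`. -/
instance instLieRingTrivExt : LieRing (L × R) where
  bracket x y := (⁅x.1, y.1⁆, 0)
  add_lie x y z := by ext <;> simp [add_lie]
  lie_add x y z := by ext <;> simp [lie_add]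
  lie_self x := by ext <;> simp
  leibniz_lie x y z := by ext <;> simp

instance instLieAlgebraTrivExt [LieAlgebra R L] : LieAlgebra R (L × R) where
  lie_smul t x y := by
    show ((⁅x.1, (t • y).1⁆ : L), (0 : R)) = t • (⁅x.1, y.1⁆, (0 : R))
    ext <;> simp

end TrivialExtension


/-- The underlying vector space of the 5-dimensional nilpotent Lie algebra `L53`. -/
def L53 : Type := Fin 5 → ℝ

instance : AddCommGroup L53 := inferInstanceAs (AddCommGroup (Fin 5 → ℝ))
instance : Module ℝ L53 := inferInstanceAs (Module ℝ (Fin 5 → ℝ))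

theorem L53.add_apply (x y : L53) (i : Fin 5) : (x + y) i = x i + y i := rfl
theorem L53.smul_apply (t : ℝ) (x : L53) (i : Fin 5) : (t • x) i = t * x i := rfl

/-- The bracket of `L53`: `[e1,e2] = e3`, `[e1,e3] = e4`. -/
def L53.b (x y : Fin 5 → ℝ) : Fin 5 → ℝ := ![0, 0, x 0 * y 1 - x 1 * y 0, x 0 * y 2 - x 2 * y 0, 0]

instance : LieRing L53 where
  bracket x y := L53.b x y
  add_lie x y z := by
    show L53.b (x + y) z = L53.b x z + L53.b y z
    funext i; fin_cases i <;> simp [L53.b, L53.add_apply] <;> ring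
  lie_add x y z := by
    show L53.b x (y + z) = L53.b x y + L53.b x z
    funext i; fin_cases i <;> simp [L53.b, L53.add_apply] <;> ring
  lie_self x := by
    show L53.b x x = 0
    funext i; fin_cases i <;> simp [L53.b] <;> ring
  leibniz_lie x y z := by
    show L53.b x (L53.b y z) = L53.b (L53.b x y) z + L53.b y (L53.b x z)
    funext i; fin_cases i <;> simp [L53.b, L53.add_apply] <;> ring

instance : LieAlgebra ℝ L53 where
  lie_smul t x y := by
    show L53.b x (t • y) = t • L53.b x y
    funext i; fin_cases i <;> simp [L53.b, L53.smul_apply] <;> ring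

/-- The standard basis `e1, …, e5` of `L53` (indexed by `0, …, 4`). -/
def L53.e (i : Fin 5) : L53 := (Pi.single i 1 : Fin 5 → ℝ)

/-- The dual basis `e^1, …, e^5` of `L53` (indexed by `0, …, 4`). -/
def L53.eps (i : Fin 5) : Module.Dual ℝ L53 where
  toFun x := x i
  map_add' _ _ := rfl
  map_smul' _ _ := rfl


/-- The complexification `(g_ℝ)_ℂ = ℂ ⊗[ℝ] (L53 ⊕ ℝ)`, a complex Lie algebra. -/
abbrev gRC : Type := ℂ ⊗[ℝ] (L53 × ℝ)

/-- The canonical inclusion `g_ℝ → (g_ℝ)_ℂ`. -/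
def inc (p : L53 × ℝ) : gRC := (1 : ℂ) ⊗ₜ[ℝ] p

/-- `K = span_ℂ {1, e1, e3, e4, e2 − i e5} ⊆ (g_ℝ)_ℂ`. -/
def Ksub : Submodule ℂ gRC :=
  Submodule.span ℂ {inc (0, 1), inc (L53.e 0, 0), inc (L53.e 2, 0), inc (L53.e 3, 0),
    inc (L53.e 1, 0) - Complex.I • inc (L53.e 4, 0)}

/-!
In the coordinates of `gRCBasis` (index `.inl i` is the paper's `e_{i+1}`), `K` lies in the
hyperplane `x₅ + i x₂ = 0` and contains the derived algebra `span {e₃, e₄}`, so it is closed under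
the bracket. Conjugation moves that hyperplane to `x₅ - i x₂ = 0`, so `K ∩ conj K` lies in
`x₂ = x₅ = 0`; conversely `e₂` and `e₅` are the real and imaginary parts of `e₂ - i e₅ ∈ K`, so
`K + conj K` contains the whole basis.
-/

open Module Submodule Complex ComplexConjugate

section Complexification

variable {V : Type*} [AddCommGroup V] [Module ℝ V]

theorem cxConj_tmul (a : ℂ) (v : V) : cxConj V (a ⊗ₜ v) = conj a ⊗ₜ v := by
  simp [cxConj]

theorem cxConj_one_tmul (v : V) : cxConj V ((1 : ℂ) ⊗ₜ v) = (1 : ℂ) ⊗ₜ v := by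
  simp [cxConj_tmul]

theorem Algebra.TensorProduct.basis_repr_cxConj {ι : Type*} (b : Basis ι ℝ V)
    (x : ℂ ⊗[ℝ] V) (i : ι) :
    (Algebra.TensorProduct.basis ℂ b).repr (cxConj V x) i =
      conj ((Algebra.TensorProduct.basis ℂ b).repr x i) := by
  induction x using TensorProduct.induction_on with
  | zero => simp
  | add x y hx hy => simp only [map_add, Finsupp.add_apply, hx, hy]
  | tmul a v => simp [cxConj_tmul, Algebra.TensorProduct.basis_repr_tmul]

theorem one_tmul_mem_cxConj_map {P : Submodule ℂ (ℂ ⊗[ℝ] V)} {v : V}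
    (hv : (1 : ℂ) ⊗ₜ v ∈ P) : (1 : ℂ) ⊗ₜ v ∈ P.map (cxConj V) :=
  ⟨_, hv, cxConj_one_tmul v⟩

theorem one_tmul_mem_sup_cxConj_map {P : Submodule ℂ (ℂ ⊗[ℝ] V)} {v w : V}
    (h : (1 : ℂ) ⊗ₜ v - I • (1 : ℂ) ⊗ₜ w ∈ P) :
    (1 : ℂ) ⊗ₜ v ∈ P ⊔ P.map (cxConj V) ∧ (1 : ℂ) ⊗ₜ w ∈ P ⊔ P.map (cxConj V) := by
  set z := (1 : ℂ) ⊗ₜ[ℝ] v - I • (1 : ℂ) ⊗ₜ[ℝ] w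
  have hz : z ∈ P ⊔ P.map (cxConj V) := mem_sup_left h
  have hz' : cxConj V z ∈ P ⊔ P.map (cxConj V) := mem_sup_right ⟨z, h, rfl⟩
  have hconj : cxConj V z = (1 : ℂ) ⊗ₜ v + I • (1 : ℂ) ⊗ₜ w := by
    simp [z, cxConj_one_tmul]
  rw [hconj] at hz'
  constructor
  · have hv : (1 : ℂ) ⊗ₜ[ℝ] v = (2⁻¹ : ℂ) • z + (2⁻¹ : ℂ) • ((1 : ℂ) ⊗ₜ v + I • (1 : ℂ) ⊗ₜ w) := by
      simp only [z]; module
    rw [hv]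
    exact add_mem (smul_mem _ _ hz) (smul_mem _ _ hz')
  · have hw : (1 : ℂ) ⊗ₜ[ℝ] w = (I / 2) • z - (I / 2) • ((1 : ℂ) ⊗ₜ v + I • (1 : ℂ) ⊗ₜ w) := by
      simp only [z]
      linear_combination (norm := module) I_mul_I • (1 : ℂ) ⊗ₜ[ℝ] w
    rw [hw]
    exact sub_mem (smul_mem _ _ hz) (smul_mem _ _ hz')

theorem cxSpan_span_le {s : Set V} {P : Submodule ℂ (ℂ ⊗[ℝ] V)}
    (h : ∀ v ∈ s, (1 : ℂ) ⊗ₜ v ∈ P) : cxSpan V (span ℝ s) ≤ P := by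
  have hs : span ℝ s ≤ (P.restrictScalars ℝ).comap (TensorProduct.mk ℝ ℂ V 1) := span_le.mpr h
  exact span_le.mpr (Set.image_subset_iff.mpr hs)

theorem lie_mem_cxSpan {L : Type*} [LieRing L] [LieAlgebra ℝ L] {S : Submodule ℝ L}
    (hS : ∀ p q : L, ⁅p, q⁆ ∈ S) (x y : ℂ ⊗[ℝ] L) : ⁅x, y⁆ ∈ cxSpan L S := by
  induction x using TensorProduct.induction_on with
  | zero => simp
  | add x x' hx hx' => rw [add_lie]; exact add_mem hx hx'
  | tmul a p =>
    induction y using TensorProduct.induction_on with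
    | zero => rw [lie_zero (L := ℂ ⊗[ℝ] L)]; exact zero_mem _
    | add y y' hy hy' => rw [lie_add (L := ℂ ⊗[ℝ] L)]; exact add_mem hy hy'
    | tmul b q =>
      rw [LieAlgebra.ExtendScalars.bracket_tmul, ← mul_one (a * b), ← smul_eq_mul,
        ← TensorProduct.smul_tmul']
      exact smul_mem _ _ (subset_span ⟨_, hS p q, rfl⟩)

end Complexification

theorem L53.prod_lie_mem_span (p q : L53 × ℝ) :
    ⁅p, q⁆ ∈ span ℝ {((L53.e 2, 0) : L53 × ℝ), (L53.e 3, 0)} := by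
  refine mem_span_pair.mpr ⟨p.1 0 * q.1 1 - p.1 1 * q.1 0, p.1 0 * q.1 2 - p.1 2 * q.1 0, ?_⟩
  refine Prod.ext ?_ (by simp; rfl)
  funext i
  change _ = L53.b p.1 q.1 i
  simp only [Prod.fst_add, Prod.smul_fst, L53.add_apply, L53.smul_apply]
  fin_cases i <;> simp [L53.b, L53.e]

def L53.basis : Basis (Fin 5) ℝ L53 := Pi.basisFun ℝ (Fin 5)

theorem L53.basis_apply (i : Fin 5) : L53.basis i = L53.e i := Pi.basisFun_apply ℝ (Fin 5) i

def gRBasis : Basis (Fin 5 ⊕ Unit) ℝ (L53 × ℝ) :=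
  L53.basis.prod (Basis.singleton Unit ℝ)

def gRCBasis : Basis (Fin 5 ⊕ Unit) ℂ gRC :=
  Algebra.TensorProduct.basis ℂ gRBasis

theorem gRCBasis_inl (i : Fin 5) : gRCBasis (.inl i) = inc (L53.e i, 0) := by
  rw [gRCBasis, Algebra.TensorProduct.basis_apply]
  simp [gRBasis, inc, L53.basis_apply]

theorem gRCBasis_inr (u : Unit) : gRCBasis (.inr u) = inc (0, 1) := by
  rw [gRCBasis, Algebra.TensorProduct.basis_apply]
  simp [gRBasis, inc]

theorem gRCBasis_repr_cxConj (x : gRC) (i : Fin 5 ⊕ Unit) :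
    gRCBasis.repr (cxConj (L53 × ℝ) x) i = conj (gRCBasis.repr x i) :=
  Algebra.TensorProduct.basis_repr_cxConj gRBasis x i

theorem lie_mem_Ksub (x y : gRC) : ⁅x, y⁆ ∈ Ksub := by
  refine cxSpan_span_le ?_ (lie_mem_cxSpan L53.prod_lie_mem_span x y)
  rintro _ (rfl | rfl)
  · exact subset_span (by simp [inc])
  · exact subset_span (by simp [inc])

theorem Ksub_sup_map_cxConj : Ksub ⊔ Ksub.map (cxConj (L53 × ℝ)) = ⊤ := by
  obtain ⟨h1, h4⟩ := one_tmul_mem_sup_cxConj_map (P := Ksub) (v := (L53.e 1, 0))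
    (w := (L53.e 4, 0)) (subset_span (by simp [inc]))
  rw [eq_top_iff, ← gRCBasis.span_eq, span_le]
  rintro _ ⟨i | u, rfl⟩
  · fin_cases i <;> rw [gRCBasis_inl]
    · exact mem_sup_left (subset_span (by simp))
    · exact h1
    · exact mem_sup_left (subset_span (by simp))
    · exact mem_sup_left (subset_span (by simp))
    · exact h4
  · exact mem_sup_left (subset_span (by simp [gRCBasis_inr]))

theorem Ksub_le_ker_coord :
    Ksub ≤ LinearMap.ker (gRCBasis.coord (.inl 4) + I • gRCBasis.coord (.inl 1)) := by
  rw [Ksub, span_le]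
  rintro _ (rfl | rfl | rfl | rfl | rfl) <;> simp [← gRCBasis_inl, ← gRCBasis_inr ()]

theorem repr_eq_zero_of_mem_Ksub_inf {x : gRC}
    (hx : x ∈ Ksub ⊓ Ksub.map (cxConj (L53 × ℝ))) :
    gRCBasis.repr x (.inl 1) = 0 ∧ gRCBasis.repr x (.inl 4) = 0 := by
  obtain ⟨hxK, hxK'⟩ := hx
  have hK : gRCBasis.repr x (.inl 4) + I * gRCBasis.repr x (.inl 1) = 0 := by
    simpa using Ksub_le_ker_coord hxK
  have hK' : gRCBasis.repr x (.inl 4) - I * gRCBasis.repr x (.inl 1) = 0 := by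
    obtain ⟨y, hyK, rfl⟩ := hxK'
    simpa [gRCBasis_repr_cxConj, sub_eq_add_neg] using congrArg conj (Ksub_le_ker_coord hyK)
  have h1 : gRCBasis.repr x (.inl 1) = 0 := by
    have h : (2 * I) * gRCBasis.repr x (.inl 1) = 0 := by linear_combination hK - hK'
    simpa [I_ne_zero] using h
  exact ⟨h1, by linear_combination hK - I * h1⟩

theorem Ksub_inf_map_cxConj : Ksub ⊓ Ksub.map (cxConj (L53 × ℝ)) =
    span ℂ {inc (0, 1), inc (L53.e 0, 0), inc (L53.e 2, 0), inc (L53.e 3, 0)} := by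
  have hspan : span ℂ {inc (0, 1), inc (L53.e 0, 0), inc (L53.e 2, 0), inc (L53.e 3, 0)} =
      span ℂ (gRCBasis '' {.inr (), .inl 0, .inl 2, .inl 3}) := by
    simp [Set.image_insert_eq, gRCBasis_inl, gRCBasis_inr]
  refine le_antisymm (fun x hx => ?_) (span_le.mpr ?_)
  · obtain ⟨h1, h4⟩ := repr_eq_zero_of_mem_Ksub_inf hx
    rw [hspan, Basis.mem_span_image]
    intro i hi
    rw [Finset.mem_coe, Finsupp.mem_support_iff] at hi
    rcases i with i | ⟨⟩
    · fin_cases i <;> simp_all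
    · simp
  · rintro _ (rfl | rfl | rfl | rfl) <;>
      exact ⟨subset_span (by simp), one_tmul_mem_cxConj_map (subset_span (by simp [inc]))⟩

/-- Let `g = L_{5,3}` (nonzero brackets `[e1,e2]=e3`, `[e1,e3]=e4`) and
let `g_ℝ = g ⊕ ℝ` with bracket `[(ξ,r),(η,k)] = ([ξ,η],0)` and `1 := (0,1)`.  In the
complexification `(g_ℝ)_ℂ`, the complex subspace
`K := span_ℂ {1, e1, e3, e4, e2 − i·e5}` is a complex Lie subalgebra and satisfies
`K + conj K = (g_ℝ)_ℂ` and `K ∩ conj K = span_ℂ {1, e1, e3, e4}`. -/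
theorem L53_transverse_complex :
    (∀ x ∈ Ksub, ∀ y ∈ Ksub, ⁅x, y⁆ ∈ Ksub) ∧
    Ksub ⊔ Ksub.map (cxConj (L53 × ℝ)) = ⊤ ∧
    Ksub ⊓ Ksub.map (cxConj (L53 × ℝ)) =
      Submodule.span ℂ {inc (0, 1), inc (L53.e 0, 0), inc (L53.e 2, 0), inc (L53.e 3, 0)} :=
  ⟨fun x _ y _ => lie_mem_Ksub x y, Ksub_sup_map_cxConj, Ksub_inf_map_cxConj⟩
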